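/- arXiv:2206.10477 — 3 statements merged into one kernel-verified Lean document; each statement's English description precedes it below -/
import Mathlib

section
/- Let I be a nonempty finite index set, let K : I → ℝ with K_i > 0 for all i ∈ I, let Y : I → ℝ be injective, let D : I → {0, 1}, and fix real numbers 0 ≤ t ≤ t_horizon. Assume there exists j ∈ I with Y_j > t_horizon. For s ∈ ℝ define the hazard estimate ĝ(s) := (∑_{i∈I} K_i·D_i·1{Y_i = s}) / (∑_{i∈I} K_i·1{Y_i ≥ s}) (with the convention 0/0 = 0), the at-risk weight d_K^+(s) := ∑_{j∈I} K_j·1{Y_j > s}, the set of death times T := {Y_i : i ∈ I, D_i = 1}, and the survival estimate Ŝ(t) := ∏_{s ∈ T, s ≤ t} (1 − ĝ(s)). Then Ŝ(t) = ∏_{i∈I} ( d_K^+(Y_i) / (K_i + d_K^+(Y_i)) )^{D_i·1{Y_i ≤ t}}, and moreover Ŝ(t) > 0. -/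
/-!
Without ties, the weighted risk set at an observed time `Y i` is `i` itself together with everyone
observed strictly later, so the hazard factor at a death time is
`1 - K i / (K i + d_K⁺(Y i)) = d_K⁺(Y i) / (K i + d_K⁺(Y i))`. The subject observed beyond the
horizon keeps `d_K⁺(Y i) > 0` for `Y i ≤ t`, so every factor is positive, and since `Y` is
injective the product over death times up to `t` is the product over subjects `i` with `D i = 1`
and `Y i ≤ t`, which is what the exponent `D i · 1{Y i ≤ t}` selects.
-/

open Finset

theorem Function.Injective.sum_mul_ite_eq {ι β R : Type*} [Fintype ι] [DecidableEq β]
    [NonAssocSemiring R] {Y : ι → β} (hY : Function.Injective Y) (f : ι → R) (i : ι) :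
    ∑ j, f j * (if Y j = Y i then 1 else 0) = f i := by
  rw [sum_eq_single i (fun j _ hji => by simp [hY.ne hji]) (by simp)]
  simp

theorem Function.Injective.sum_mul_ite_le_eq_add_sum_mul_ite_lt {ι α R : Type*} [Fintype ι]
    [LinearOrder α] [NonAssocSemiring R] {Y : ι → α} (hY : Function.Injective Y)
    (K : ι → R) (i : ι) :
    ∑ j, K j * (if Y i ≤ Y j then 1 else 0) =
      K i + ∑ j, K j * (if Y i < Y j then 1 else 0) := by
  classical
  have hsplit : ∀ j, K j * (if Y i ≤ Y j then 1 else 0)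
      = (if i = j then K j else 0) + K j * (if Y i < Y j then 1 else 0) := by
    intro j
    rcases eq_or_ne i j with rfl | hij
    · simp
    · simp [hij, le_iff_eq_or_lt, hY.ne hij]
  simp only [hsplit, sum_add_distrib, sum_ite_eq, mem_univ, if_true]

theorem sum_mul_ite_lt_pos {ι α R : Type*} [Fintype ι] [LinearOrder α] [Semiring R]
    [PartialOrder R] [IsStrictOrderedRing R] {K : ι → R} {Y : ι → α} (hK : ∀ i, 0 ≤ K i)
    {s : α} {j : ι} (hKj : 0 < K j) (hj : s < Y j) :
    0 < ∑ i, K i * (if s < Y i then 1 else 0) :=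
  sum_pos' (fun i _ => mul_nonneg (hK i) (by split_ifs <;> norm_num))
    ⟨j, mem_univ j, by simpa [hj] using hKj⟩

theorem Real.rpow_mul_ite_of_eq_zero_or_eq_one {x d : ℝ} (hd : d = 0 ∨ d = 1) (p : Prop)
    [Decidable p] : x ^ (d * (if p then 1 else 0)) = if d = 1 ∧ p then x else 1 := by
  rcases hd with rfl | rfl <;> by_cases hp : p <;> simp [hp]

theorem kernel_kaplan_meier_product_form_general
    {I : Type*} [Fintype I]
    (K Y D : I → ℝ) (hK : ∀ i, 0 < K i) (hY : Function.Injective Y)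
    (hD : ∀ i, D i = 0 ∨ D i = 1)
    (t thorizon : ℝ) (ht : t ≤ thorizon)
    (hrisk : ∃ j, thorizon < Y j)
    (g : ℝ → ℝ)
    (hg : ∀ s, g s = (∑ i, K i * D i * (if Y i = s then 1 else 0)) /
                     (∑ i, K i * (if s ≤ Y i then 1 else 0)))
    (dK : ℝ → ℝ) (hdK : ∀ s, dK s = ∑ j, K j * (if s < Y j then 1 else 0))
    (T : Finset ℝ) (hT : T = (Finset.univ.filter fun i => D i = 1).image Y)
    (S : ℝ) (hS : S = ∏ s ∈ T.filter (fun s => s ≤ t), (1 - g s)) :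
    S = ∏ i, (dK (Y i) / (K i + dK (Y i))) ^ (D i * (if Y i ≤ t then 1 else 0)) ∧
    0 < S := by
  obtain ⟨j, hj⟩ := hrisk
  set A := univ.filter fun i => D i = 1 ∧ Y i ≤ t
  have hdK_pos : ∀ i ∈ A, 0 < dK (Y i) := fun i hi => by
    rw [hdK]
    exact sum_mul_ite_lt_pos (fun i => (hK i).le) (hK j)
      (((mem_filter.1 hi).2.2.trans ht).trans_lt hj)
  have hfactor : ∀ i ∈ A, 1 - g (Y i) = dK (Y i) / (K i + dK (Y i)) := fun i hi => by
    have hden : K i + dK (Y i) ≠ 0 := by linarith [hK i, hdK_pos i hi]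
    rw [hg, hY.sum_mul_ite_eq, hY.sum_mul_ite_le_eq_add_sum_mul_ite_lt, ← hdK,
      (mem_filter.1 hi).2.1, mul_one, one_sub_div hden, add_sub_cancel_left]
  have hS_A : S = ∏ i ∈ A, dK (Y i) / (K i + dK (Y i)) := by
    rw [hS, hT, filter_image, filter_filter, prod_image hY.injOn]
    exact prod_congr rfl hfactor
  refine ⟨?_, ?_⟩
  · simp only [hS_A, Real.rpow_mul_ite_of_eq_zero_or_eq_one (hD _), A, prod_filter]
  · rw [hS_A]
    exact prod_pos fun i hi => div_pos (hdK_pos i hi) (add_pos (hK i) (hdK_pos i hi))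

/-- Convenient product form of the truncated-kernel Kaplan–Meier estimator. With positive kernel
weights `K i`, no ties among the observed times `Y i` (injectivity), event indicators
`D i ∈ {0, 1}`, and some observed time exceeding the horizon `t_horizon ≥ t`, the survival
estimate `Ŝ(t) = ∏_{s ∈ T, s ≤ t} (1 - ĝ(s))` (product over death times up to `t`) equals
`∏_i (d_K⁺(Y i) / (K i + d_K⁺(Y i)))^(D i · 1{Y i ≤ t})`, and is strictly positive. -/
theorem kernel_kaplan_meier_product_form
    {I : Type*} [Fintype I] [Nonempty I] [DecidableEq I]
    (K Y D : I → ℝ) (hK : ∀ i, 0 < K i) (hY : Function.Injective Y)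
    (hD : ∀ i, D i = 0 ∨ D i = 1)
    (t thorizon : ℝ) (ht0 : 0 ≤ t) (ht : t ≤ thorizon)
    (hrisk : ∃ j, thorizon < Y j)
    (g : ℝ → ℝ)
    (hg : ∀ s, g s = (∑ i, K i * D i * (if Y i = s then 1 else 0)) /
                     (∑ i, K i * (if s ≤ Y i then 1 else 0)))
    (dK : ℝ → ℝ) (hdK : ∀ s, dK s = ∑ j, K j * (if s < Y j then 1 else 0))
    (T : Finset ℝ) (hT : T = (Finset.univ.filter fun i => D i = 1).image Y)
    (S : ℝ) (hS : S = ∏ s ∈ T.filter (fun s => s ≤ t), (1 - g s)) :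
    S = ∏ i, (dK (Y i) / (K i + dK (Y i))) ^ (D i * (if Y i ≤ t then 1 else 0)) ∧
    0 < S :=
  kernel_kaplan_meier_product_form_general K Y D hK hY hD t thorizon ht hrisk g hg dK hdK T hT S hS
end

section
/- Let I be a nonempty finite index set with |I| = N. Let K : I → ℝ with 0 < K_min ≤ K_i ≤ K_max for all i ∈ I, let Y : I → ℝ, let D : I → {0, 1}, and fix real numbers t ≤ t_horizon and θ ∈ (0, 1]. Define d_K^+(s) := ∑_{j∈I} K_j·1{Y_j > s}. Suppose #{j ∈ I : Y_j > t_horizon} > Nθ/2, and suppose z := K_min·N·θ/(2·K_max) ≥ 0.46241. Then ∑_{i∈I} D_i·1{Y_i ≤ t} · ∑_{ℓ=2}^∞ 1/( ℓ·(1 + d_K^+(Y_i)/K_i)^ℓ ) ≤ 4·K_max² / (K_min²·θ²·N). -/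
private lemma W3_tsum_aux (x z : ℝ) (hz : 0 < z) (hx : 1 + z ≤ x) :
    ∑' ℓ : ℕ, 1 / ((ℓ + 2 : ℝ) * x ^ (ℓ + 2)) ≤ 1 / (2 * (1 + z) * z) := by
  have hx1 : 1 < x := by linarith
  have hx0 : 0 < x := by linarith
  set r := 1 / x with hrdef
  have hr0 : 0 ≤ r := by positivity
  have hr1 : r < 1 := by rw [hrdef, div_lt_one hx0]; linarith
  have hgeo : Summable (fun ℓ : ℕ => r ^ ℓ) := summable_geometric_of_lt_one hr0 hr1
  have hgeom : Summable (fun ℓ : ℕ => (1/2 : ℝ) * r ^ (ℓ + 2)) :=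
    (hgeo.mul_left ((1/2) * r ^ 2)).congr (fun ℓ => by rw [pow_add]; ring)
  have key : ∀ ℓ : ℕ, 1 / ((ℓ + 2 : ℝ) * x ^ (ℓ + 2)) ≤ (1/2 : ℝ) * r ^ (ℓ + 2) := by
    intro ℓ
    have hxp : (0:ℝ) < x ^ (ℓ + 2) := by positivity
    have h2 : (2:ℝ) ≤ (ℓ + 2 : ℝ) := by
      have : (0:ℝ) ≤ (ℓ:ℝ) := Nat.cast_nonneg ℓ; linarith
    have hle : 1 / ((ℓ + 2 : ℝ) * x ^ (ℓ + 2)) ≤ 1 / (2 * x ^ (ℓ + 2)) := by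
      apply one_div_le_one_div_of_le (by positivity)
      exact mul_le_mul_of_nonneg_right h2 hxp.le
    refine hle.trans_eq ?_
    rw [hrdef, div_pow, one_pow]
    rw [mul_one_div, one_div, one_div, mul_inv, ← div_eq_mul_inv]
  have hsum : Summable (fun ℓ : ℕ => 1 / ((ℓ + 2 : ℝ) * x ^ (ℓ + 2))) :=
    Summable.of_nonneg_of_le (fun ℓ => by positivity) key hgeom
  have h1 : ∑' ℓ : ℕ, 1 / ((ℓ + 2 : ℝ) * x ^ (ℓ + 2)) ≤ ∑' ℓ : ℕ, (1/2 : ℝ) * r ^ (ℓ + 2) :=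
    Summable.tsum_le_tsum key hsum hgeom
  have h2 : ∑' ℓ : ℕ, (1/2 : ℝ) * r ^ (ℓ + 2) = (1/2) * r ^ 2 * (1 - r)⁻¹ := by
    have he : ∑' ℓ : ℕ, (1/2 : ℝ) * r ^ (ℓ + 2) = ∑' ℓ : ℕ, ((1/2) * r ^ 2) * r ^ ℓ :=
      tsum_congr fun ℓ => by rw [pow_add]; ring
    rw [he, tsum_mul_left, tsum_geometric_of_lt_one hr0 hr1, mul_assoc]
  have hx1' : x - 1 ≠ 0 := by linarith
  have h3 : (1/2 : ℝ) * r ^ 2 * (1 - r)⁻¹ = 1 / (2 * x * (x - 1)) := by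
    rw [hrdef]
    rw [show (1 : ℝ) - 1/x = (x-1)/x by field_simp]
    field_simp
  have h4 : 1 / (2 * x * (x - 1)) ≤ 1 / (2 * (1 + z) * z) := by
    apply one_div_le_one_div_of_le (by positivity)
    nlinarith
  calc ∑' ℓ : ℕ, 1 / ((ℓ + 2 : ℝ) * x ^ (ℓ + 2)) ≤ (1/2) * r ^ 2 * (1 - r)⁻¹ := h1.trans_eq h2
    _ = 1 / (2 * x * (x - 1)) := h3
    _ ≤ 1 / (2 * (1 + z) * z) := h4

/-- Deterministic core of the bound on the higher-order Taylor remainder term `W₃` of the log of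
the kernel Kaplan–Meier estimator: with kernel weights `0 < K_min ≤ K_i ≤ K_max` over `N`
neighbors, event indicators `D_i ∈ {0,1}`, at-risk weight `d_K⁺(s) = ∑_j K_j·1{Y_j > s}`, more
than `Nθ/2` neighbors surviving past `t_horizon ≥ t`, and `K_min·N·θ/(2K_max) ≥ 0.46241`, one has
`∑_i D_i·1{Y_i ≤ t}·∑_{ℓ≥2} 1/(ℓ(1 + d_K⁺(Y_i)/K_i)^ℓ) ≤ 4K_max²/(K_min²θ²N)`. -/
theorem W3_remainder_bound
    {I : Type*} [Fintype I] [Nonempty I]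
    (N : ℕ) (hN : Fintype.card I = N)
    (K Y D : I → ℝ) (Kmin Kmax : ℝ) (hKmin : 0 < Kmin)
    (hK : ∀ i, Kmin ≤ K i ∧ K i ≤ Kmax)
    (hD : ∀ i, D i = 0 ∨ D i = 1)
    (t thorizon θ : ℝ) (ht : t ≤ thorizon) (hθ0 : 0 < θ) (hθ1 : θ ≤ 1)
    (dK : ℝ → ℝ) (hdK : ∀ s, dK s = ∑ j, K j * (if s < Y j then 1 else 0))
    (hhorizon : (N : ℝ) * θ / 2 < ({j : I | thorizon < Y j}.ncard : ℝ))
    (hz : 0.46241 ≤ Kmin * N * θ / (2 * Kmax)) :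
    ∑ i, D i * (if Y i ≤ t then 1 else 0) *
        ∑' ℓ : ℕ, 1 / ((ℓ + 2 : ℝ) * (1 + dK (Y i) / K i) ^ (ℓ + 2))
      ≤ 4 * Kmax ^ 2 / (Kmin ^ 2 * θ ^ 2 * N) := by
  have hKmax : 0 < Kmax :=
    hKmin.trans_le ((hK (Classical.arbitrary I)).1.trans (hK (Classical.arbitrary I)).2)
  have hN0 : 0 < N := hN ▸ Fintype.card_pos
  have hN0' : (0:ℝ) < N := by exact_mod_cast hN0
  set z := Kmin * N * θ / (2 * Kmax) with hzdef
  have hz0 : (0:ℝ) < z := lt_of_lt_of_le (by norm_num) hz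
  set B := 1 / (2 * (1 + z) * z) with hBdef
  have hB0 : 0 ≤ B := by positivity
  -- the filter cardinality bound
  have hcount : ({j : I | thorizon < Y j}.ncard : ℝ)
      = ((Finset.univ.filter fun j => thorizon < Y j).card : ℝ) := by
    congr 1
    rw [← Set.ncard_coe_finset]
    congr 1
    ext j; simp
  -- termwise bound
  have hterm : ∀ i, D i * (if Y i ≤ t then 1 else 0) *
      ∑' ℓ : ℕ, 1 / ((ℓ + 2 : ℝ) * (1 + dK (Y i) / K i) ^ (ℓ + 2)) ≤ B := by
    intro i
    by_cases hYi : Y i ≤ t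
    · have hKi : 0 < K i := hKmin.trans_le (hK i).1
      -- lower bound dK (Y i)
      have hlow : Kmin * ((Finset.univ.filter fun j => thorizon < Y j).card : ℝ)
          ≤ dK (Y i) := by
        rw [hdK]
        calc Kmin * ((Finset.univ.filter fun j => thorizon < Y j).card : ℝ)
            = ∑ j, (if thorizon < Y j then Kmin else 0) := by
              rw [Finset.sum_ite, Finset.sum_const, Finset.sum_const_zero, add_zero,
                nsmul_eq_mul, mul_comm]
          _ ≤ ∑ j, K j * (if Y i < Y j then 1 else 0) := by
              apply Finset.sum_le_sum
              intro j _
              by_cases hj : thorizon < Y j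
              · have : Y i < Y j := lt_of_le_of_lt (hYi.trans ht) hj
                simp [hj, this, (hK j).1]
              · have hKj : 0 < K j := hKmin.trans_le (hK j).1
                simp only [hj, if_neg]
                positivity
      have hdKlow : Kmin * ((N:ℝ) * θ / 2) < dK (Y i) := by
        refine lt_of_lt_of_le ?_ hlow
        exact mul_lt_mul_of_pos_left (hcount ▸ hhorizon) hKmin
      have hdK0 : 0 < dK (Y i) := lt_of_le_of_lt (by positivity) hdKlow
      have hxz : 1 + z ≤ 1 + dK (Y i) / K i := by
        have h1 : z ≤ dK (Y i) / Kmax := by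
          rw [hzdef, div_le_div_iff₀ (by positivity) hKmax]
          nlinarith
        have h2 : dK (Y i) / Kmax ≤ dK (Y i) / K i :=
          div_le_div_of_nonneg_left hdK0.le hKi (hK i).2
        linarith
      have hS := W3_tsum_aux (1 + dK (Y i) / K i) z hz0 hxz
      rcases hD i with h0 | h1
      · simpa [h0] using hB0
      · simp only [h1, hYi, if_pos, one_mul, mul_one]
        exact hS
    · simp [hYi, hB0]
  calc ∑ i, D i * (if Y i ≤ t then 1 else 0) *
        ∑' ℓ : ℕ, 1 / ((ℓ + 2 : ℝ) * (1 + dK (Y i) / K i) ^ (ℓ + 2))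
      ≤ ∑ _i : I, B := Finset.sum_le_sum fun i _ => hterm i
    _ = (N:ℝ) * B := by rw [Finset.sum_const, nsmul_eq_mul, Finset.card_univ, hN]
    _ = (N:ℝ) / (2 * (1 + z) * z) := by rw [hBdef]; ring
    _ ≤ (N:ℝ) / z ^ 2 := by
        apply div_le_div_of_nonneg_left hN0'.le (by positivity)
        nlinarith
    _ = 4 * Kmax ^ 2 / (Kmin ^ 2 * θ ^ 2 * N) := by
        rw [hzdef]
        field_simp
        ring
end

section
/- Let μ be a Borel probability measure on a metric space M, let r > 0, and let F ⊆ M be a finite set such that the support of μ is contained in ⋃_{f ∈ F} B(f, r/2), where B(x, ρ) denotes the closed ball of radius ρ centered at x. Then ∫ 1/μ(B(u, r)) dμ(u) ≤ |F|. In particular, if the support of μ admits an (r/2)-cover of size N(r/2), then E_{U∼μ}[ 1/μ(B(U, r)) ] ≤ N(r/2). -/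
open MeasureTheory Metric
open scoped ENNReal

/-!
The `(r/2)`-balls around the points of `F` cover `μ`-almost everything, so the integral is at most
the sum over `f ∈ F` of the integrals over `closedBall f (r/2)`. Every `u` in that ball has
`closedBall f (r/2) ⊆ closedBall u r`, so on the ball the integrand is at most
`μ (closedBall f (r/2))⁻¹`, and each of these integrals is at most `1`.
-/

theorem lintegral_biUnion_finset_le {α β : Type*} [MeasurableSpace α] (μ : Measure α)
    (s : Finset β) (t : β → Set α) (g : α → ℝ≥0∞) :
    ∫⁻ a in ⋃ b ∈ s, t b, g a ∂μ ≤ ∑ b ∈ s, ∫⁻ a in t b, g a ∂μ :=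
  calc ∫⁻ a in ⋃ b ∈ s, t b, g a ∂μ
      = ∫⁻ a in ⋃ b : (s : Set β), t b, g a ∂μ := by
        simp only [← Finset.mem_coe, Set.biUnion_eq_iUnion]
    _ ≤ ∑' b : (s : Set β), ∫⁻ a in t b, g a ∂μ := lintegral_iUnion_le _ _
    _ = ∑ b ∈ s, ∫⁻ a in t b, g a ∂μ :=
        Finset.tsum_subtype' s fun b => ∫⁻ a in t b, g a ∂μ

theorem lintegral_le_sum_setLIntegral_of_measure_compl_biUnion_eq_zero {α β : Type*}
    [MeasurableSpace α] {μ : Measure α} {s : Finset β} {t : β → Set α}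
    (hcover : μ (⋃ b ∈ s, t b)ᶜ = 0) (g : α → ℝ≥0∞) :
    ∫⁻ a, g a ∂μ ≤ ∑ b ∈ s, ∫⁻ a in t b, g a ∂μ := by
  conv_lhs => rw [← Measure.restrict_eq_self_of_ae_mem (mem_ae_iff.2 hcover)]
  exact lintegral_biUnion_finset_le μ s t g

theorem setLIntegral_inv_measure_le_one {α : Type*} [MeasurableSpace α] (μ : Measure α)
    {A : Set α} {B : α → Set α} (hAB : ∀ u ∈ A, A ⊆ B u) :
    ∫⁻ u in A, (μ (B u))⁻¹ ∂μ ≤ 1 :=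
  calc ∫⁻ u in A, (μ (B u))⁻¹ ∂μ
      ≤ ∫⁻ _ in A, (μ A)⁻¹ ∂μ :=
        setLIntegral_mono measurable_const fun u hu =>
          ENNReal.inv_le_inv.2 (measure_mono (hAB u hu))
    _ = (μ A)⁻¹ * μ A := setLIntegral_const _ _
    _ ≤ 1 := ENNReal.inv_mul_le_one _

theorem closedBall_half_subset_closedBall {M : Type*} [PseudoMetricSpace M] {f u : M} {r : ℝ}
    (hu : u ∈ closedBall f (r / 2)) : closedBall f (r / 2) ⊆ closedBall u r :=
  closedBall_subset_closedBall' <| by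
    rw [dist_comm]
    linarith [mem_closedBall.1 hu]

theorem integral_inv_measure_ball_le_covering_number_general
    {M : Type*} [MetricSpace M] [MeasurableSpace M]
    (μ : Measure M) (r : ℝ)
    (F : Finset M)
    (hsupp : μ ((⋃ f ∈ F, closedBall f (r / 2))ᶜ) = 0) :
    ∫⁻ u, (μ (closedBall u r))⁻¹ ∂μ ≤ F.card :=
  calc ∫⁻ u, (μ (closedBall u r))⁻¹ ∂μ
      ≤ ∑ f ∈ F, ∫⁻ u in closedBall f (r / 2), (μ (closedBall u r))⁻¹ ∂μ :=
        lintegral_le_sum_setLIntegral_of_measure_compl_biUnion_eq_zero hsupp _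
    _ ≤ ∑ _f ∈ F, 1 := Finset.sum_le_sum fun _ _ =>
        setLIntegral_inv_measure_le_one μ fun _ hu => closedBall_half_subset_closedBall hu
    _ = F.card := by simp

/-- If the support of a Borel probability measure `μ` on a metric space is contained in the
union of the closed balls of radius `r/2` centered at the points of a finite set `F` (i.e. `μ`
vanishes outside this closed union), then `∫ 1/μ(B(u, r)) dμ(u) ≤ |F|`. In particular, if the
support of `μ` admits an `(r/2)`-cover of size `N`, then `E_{U∼μ}[1/μ(B(U, r))] ≤ N`. -/
theorem integral_inv_measure_ball_le_covering_number
    {M : Type*} [MetricSpace M] [MeasurableSpace M] [OpensMeasurableSpace M]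
    (μ : Measure M) [IsProbabilityMeasure μ] (r : ℝ) (hr : 0 < r)
    (F : Finset M)
    (hsupp : μ ((⋃ f ∈ F, closedBall f (r / 2))ᶜ) = 0) :
    ∫⁻ u, (μ (closedBall u r))⁻¹ ∂μ ≤ F.card :=
  integral_inv_measure_ball_le_covering_number_general μ r F hsupp
end
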